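/- Let k be a field, L ⊆ ℤⁿ a lattice (subgroup), and I_L = ⟨x^{m⁺} − x^{m⁻} : m ∈ L⟩ the lattice ideal in k[x₁,...,xₙ], where m = m⁺ − m⁻ is the decomposition into positive and negative parts. Then the saturation of I_L with respect to the product x₁x₂⋯xₙ equals I_L itself: I_L : (x₁⋯xₙ)^∞ = I_L. -/

import Mathlib

open MvPolynomial

namespace Stmt15Aux

variable {k : Type*} [Field k] {n : ℕ} (L : AddSubgroup (Fin n → ℤ))

/-- The quotient class of a natural exponent vector. -/
noncomputable def qe (a : Fin n → ℕ) : (Fin n → ℤ) ⧸ L :=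
  QuotientAddGroup.mk (fun j => (a j : ℤ))

/-- The monomial map to the group algebra of `ℤⁿ/L`. -/
noncomputable def phi (k : Type*) [Field k] (n : ℕ) (L : AddSubgroup (Fin n → ℤ)) :
    MvPolynomial (Fin n) k →ₐ[k] AddMonoidAlgebra k ((Fin n → ℤ) ⧸ L) :=
  MvPolynomial.aeval fun i =>
    AddMonoidAlgebra.single (QuotientAddGroup.mk (Pi.single i 1)) 1

lemma prod_single {G : Type*} [AddCommMonoid G] (s : Finset (Fin n)) (g : Fin n → G) :
    (∏ i ∈ s, (AddMonoidAlgebra.single (g i) (1 : k))) =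
      AddMonoidAlgebra.single (∑ i ∈ s, g i) 1 := by
  classical
  induction s using Finset.induction with
  | empty => simp [AddMonoidAlgebra.one_def]
  | @insert _ _ h ih =>
      rw [Finset.prod_insert h, ih, AddMonoidAlgebra.single_mul_single,
        Finset.sum_insert h, one_mul]

lemma prod_univ (a : Fin n →₀ ℕ) :
    (∏ i, X i ^ a i : MvPolynomial (Fin n) k) = monomial a 1 := by
  rw [← prod_X_pow_eq_monomial]
  exact (Finset.prod_subset (Finset.subset_univ _) (fun x _ hx => by
    simp [Finsupp.notMem_support_iff.mp hx])).symm

lemma phi_prod (e : Fin n → ℕ) :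
    phi k n L (∏ i, X i ^ e i) = AddMonoidAlgebra.single (qe L e) 1 := by
  rw [map_prod]
  have h1 : ∀ i, phi k n L (X i ^ e i) =
      AddMonoidAlgebra.single ((e i) • (QuotientAddGroup.mk (Pi.single i 1) :
        (Fin n → ℤ) ⧸ L)) 1 := by
    intro i
    rw [map_pow]
    simp [phi, AddMonoidAlgebra.single_pow]
  simp_rw [h1]
  rw [prod_single]
  congr 1
  have h2 : ∀ i, (e i) • (QuotientAddGroup.mk (Pi.single i 1) : (Fin n → ℤ) ⧸ L) =
      QuotientAddGroup.mk (Pi.single i ((e i : ℤ))) := by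
    intro i
    show (e i) • (QuotientAddGroup.mk' L) (Pi.single i 1) =
      (QuotientAddGroup.mk' L) (Pi.single i ((e i : ℤ)))
    rw [← map_nsmul (QuotientAddGroup.mk' L)]
    congr 1
    ext j
    by_cases hj : j = i
    · subst hj; simp
    · simp [hj]
  simp_rw [h2]
  show ∑ x : Fin n, (QuotientAddGroup.mk' L) (Pi.single x ((e x : ℤ))) = qe L e
  rw [← map_sum (QuotientAddGroup.mk' L)]
  show QuotientAddGroup.mk _ = _
  unfold qe
  congr 1
  exact Finset.univ_sum_single (fun j => ((e j : ℤ)))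

lemma phi_monomial (a : Fin n →₀ ℕ) (c : k) :
    phi k n L (monomial a c) = AddMonoidAlgebra.single (qe L a) c := by
  have h : (monomial a c : MvPolynomial (Fin n) k) = C c * ∏ i, X i ^ a i := by
    rw [prod_univ, C_mul_monomial, mul_one]
  rw [h, map_mul, phi_prod]
  have hc : phi k n L (C c) = AddMonoidAlgebra.single 0 c := by
    rw [MvPolynomial.algHom_C, Algebra.algebraMap_eq_smul_one, AddMonoidAlgebra.one_def,
      AddMonoidAlgebra.smul_single', mul_one]
  rw [hc, AddMonoidAlgebra.single_mul_single, zero_add, mul_one]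

end Stmt15Aux

open Stmt15Aux

/-- A lattice ideal `I_L = ⟨x^{m⁺} − x^{m⁻} : m ∈ L⟩` is saturated with respect to the
product of the variables: `I_L : (x₁⋯xₙ)^∞ = I_L`. -/
theorem stmt_15 (k : Type*) [Field k] (n : ℕ) (L : AddSubgroup (Fin n → ℤ))
    (IL : Ideal (MvPolynomial (Fin n) k))
    (hIL : IL = Ideal.span {f | ∃ m ∈ L,
      f = (∏ i, MvPolynomial.X i ^ (m i).toNat) - ∏ i, MvPolynomial.X i ^ (-(m i)).toNat}) :
    ∀ g, (∃ N : ℕ, (∏ i, MvPolynomial.X i) ^ N * g ∈ IL) ↔ g ∈ IL := by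
  classical
  set φ := phi k n L with hφ
  -- generators of IL are in ker φ
  have hgen : ∀ m ∈ L, φ ((∏ i, X i ^ (m i).toNat) - ∏ i, X i ^ (-(m i)).toNat) = 0 := by
    intro m hm
    rw [map_sub, phi_prod, phi_prod]
    have : qe L (fun j => (m j).toNat) = qe L (fun j => (-(m j)).toNat) := by
      unfold qe
      rw [QuotientAddGroup.eq_iff_sub_mem]
      have : ((fun j => ((m j).toNat : ℤ)) - fun j => (((-(m j)).toNat : ℤ))) = m := by
        funext j
        simp only [Pi.sub_apply]
        omega
      rwa [this]
    rw [this, sub_self]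
  have hILker : ∀ f ∈ IL, φ f = 0 := by
    intro f hf
    rw [hIL] at hf
    have : Ideal.span {f | ∃ m ∈ L,
        f = (∏ i, MvPolynomial.X i ^ (m i).toNat) - ∏ i, MvPolynomial.X i ^ (-(m i)).toNat}
        ≤ RingHom.ker (φ : MvPolynomial (Fin n) k →+* AddMonoidAlgebra k ((Fin n → ℤ) ⧸ L)) := by
      rw [Ideal.span_le]
      rintro f ⟨m, hm, rfl⟩
      exact hgen m hm
    exact this hf
  -- monomial differences with same class are in IL
  have hmono : ∀ a b : Fin n →₀ ℕ, qe L a = qe L b →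
      (monomial a (1 : k)) - monomial b 1 ∈ IL := by
    intro a b hab
    unfold qe at hab
    rw [QuotientAddGroup.eq_iff_sub_mem] at hab
    set m : Fin n → ℤ := (fun j => ((a j : ℤ))) - fun j => ((b j : ℤ)) with hm
    have ha' : ∀ j, min (a j) (b j) + (m j).toNat = a j := by
      intro j; simp only [hm, Pi.sub_apply]; omega
    have hb' : ∀ j, min (a j) (b j) + (-(m j)).toNat = b j := by
      intro j; simp only [hm, Pi.sub_apply]; omega
    have hgenIL : (∏ i, X i ^ (m i).toNat) - (∏ i, X i ^ (-(m i)).toNat) ∈ IL := by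
      rw [hIL]
      exact Ideal.subset_span ⟨m, hab, rfl⟩
    have key : (monomial a (1 : k)) - monomial b 1 =
        (∏ i, X i ^ min (a i) (b i)) *
          ((∏ i, X i ^ (m i).toNat) - ∏ i, X i ^ (-(m i)).toNat) := by
      rw [mul_sub, ← Finset.prod_mul_distrib, ← Finset.prod_mul_distrib]
      have e1 : (∏ i, X i ^ min (a i) (b i) * X i ^ (m i).toNat : MvPolynomial (Fin n) k)
          = ∏ i, X i ^ a i := by
        apply Finset.prod_congr rfl
        intro i _
        rw [← pow_add, ha' i]
      have e2 : (∏ i, X i ^ min (a i) (b i) * X i ^ (-(m i)).toNat : MvPolynomial (Fin n) k)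
          = ∏ i, X i ^ b i := by
        apply Finset.prod_congr rfl
        intro i _
        rw [← pow_add, hb' i]
      rw [e1, e2, prod_univ, prod_univ]
    rw [key]
    exact Ideal.mul_mem_left _ _ hgenIL
  -- ker φ ⊆ IL, by strong induction on support size
  have hker : ∀ N : ℕ, ∀ f : MvPolynomial (Fin n) k, f.support.card ≤ N → φ f = 0 → f ∈ IL := by
    intro N
    induction N with
    | zero =>
        intro f hcard _
        have : f = 0 := by
          rw [← MvPolynomial.support_eq_empty]
          exact Finset.card_eq_zero.mp (Nat.le_zero.mp hcard)
        rw [this]; exact Ideal.zero_mem _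
    | succ N ih =>
        intro f hcard hf0
        by_cases hf : f = 0
        · rw [hf]; exact Ideal.zero_mem _
        obtain ⟨a, ha⟩ := (MvPolynomial.support_nonempty.mpr hf)
        have hfa : MvPolynomial.coeff a f ≠ 0 := MvPolynomial.mem_support_iff.mp ha
        -- expand φ f as a sum of singles
        have hexp : φ f = ∑ b ∈ f.support, AddMonoidAlgebra.single (qe L b) (coeff b f) := by
          conv_lhs => rw [MvPolynomial.as_sum f, map_sum]
          exact Finset.sum_congr rfl fun b _ => phi_monomial L b _
        -- evaluate coefficient at qe L a
        have happ : (∑ b ∈ f.support,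
            AddMonoidAlgebra.single (qe L b) (coeff b f)).coeff (qe L a) = 0 := by
          rw [← hexp, hf0]; rfl
        rw [AddMonoidAlgebra.coeff_sum, Finsupp.finset_sum_apply] at happ
        simp_rw [AddMonoidAlgebra.coeff_single, Finsupp.single_apply] at happ
        rw [← Finset.add_sum_erase _ _ ha, if_pos rfl] at happ
        have hsum : ∑ b ∈ f.support.erase a,
            (if qe L b = qe L a then coeff b f else 0) = -coeff a f := by
          rw [eq_neg_iff_add_eq_zero, add_comm]; exact happ
        have hnz : ∑ b ∈ f.support.erase a,
            (if qe L b = qe L a then coeff b f else 0) ≠ 0 := by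
          rw [hsum]; exact neg_ne_zero.mpr hfa
        obtain ⟨b, hb, hbne⟩ := Finset.exists_ne_zero_of_sum_ne_zero hnz
        have hqab : qe L b = qe L a := by
          by_contra h
          rw [if_neg h] at hbne
          exact hbne rfl
        have hba : b ≠ a := Finset.ne_of_mem_erase hb
        have hbsupp : b ∈ f.support := Finset.mem_of_mem_erase hb
        -- the correction term
        set t : MvPolynomial (Fin n) k :=
          coeff a f • ((monomial b (1 : k)) - monomial a 1) with ht
        have htIL : t ∈ IL := by
          rw [ht, MvPolynomial.smul_eq_C_mul]
          exact Ideal.mul_mem_left _ _ (hmono b a hqab)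
        have htker : φ t = 0 := hILker t htIL
        set g := f + t with hg
        have hgker : φ g = 0 := by rw [hg, map_add, hf0, htker, add_zero]
        have hgsupp : g.support ⊆ f.support.erase a := by
          intro x hx
          have hx0 : coeff x g ≠ 0 := MvPolynomial.mem_support_iff.mp hx
          have hcg : coeff x g = coeff x f +
              coeff a f * ((if b = x then 1 else 0) - if a = x then 1 else 0) := by
            rw [hg, ht]
            rw [MvPolynomial.coeff_add, MvPolynomial.coeff_smul, MvPolynomial.coeff_sub,
              MvPolynomial.coeff_monomial, MvPolynomial.coeff_monomial]
            simp only [smul_eq_mul]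
          by_cases hxa : x = a
          · exfalso
            subst hxa
            rw [if_neg hba, if_pos rfl] at hcg
            simp at hcg
            exact hx0 hcg
          · apply Finset.mem_erase.mpr
            refine ⟨hxa, ?_⟩
            rw [MvPolynomial.mem_support_iff]
            intro hfx
            by_cases hxb : x = b
            · exact (MvPolynomial.mem_support_iff.mp hbsupp) (hxb ▸ hfx)
            · rw [if_neg (fun h => hxb h.symm), if_neg (fun h => hxa h.symm)] at hcg
              simp [hfx] at hcg
              exact hx0 hcg
        have hgcard : g.support.card ≤ N := by
          calc g.support.card ≤ (f.support.erase a).card := Finset.card_le_card hgsupp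
            _ = f.support.card - 1 := Finset.card_erase_of_mem ha
            _ ≤ N := by omega
        have hgIL : g ∈ IL := ih g hgcard hgker
        have : f = g - t := by rw [hg]; ring
        rw [this]
        exact Submodule.sub_mem _ hgIL htIL
  -- the image of ∏ X i is a unit
  have hunit : IsUnit (φ (∏ i, X i)) := by
    have : φ (∏ i, X i) = AddMonoidAlgebra.single (qe L (fun _ => 1)) 1 := by
      have := phi_prod L (k := k) (fun _ => 1)
      simpa using this
    rw [this]
    refine IsUnit.of_mul_eq_one (AddMonoidAlgebra.single (-(qe L fun _ => 1)) 1) ?_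
    rw [AddMonoidAlgebra.single_mul_single, add_neg_cancel, mul_one]
    rfl
  intro g
  constructor
  · rintro ⟨N, hN⟩
    have h0 : φ ((∏ i, X i) ^ N * g) = 0 := hILker _ hN
    rw [map_mul, map_pow] at h0
    have hu : IsUnit ((φ (∏ i, X i)) ^ N) := hunit.pow N
    have hgz : φ g = 0 := by
      rcases hu with ⟨u, hu⟩
      rw [← hu] at h0
      exact (Units.mul_right_eq_zero u).mp h0
    exact hker g.support.card g le_rfl hgz
  · intro hg
    exact ⟨0, by rwa [pow_zero, one_mul]⟩
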